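/- For every nonnegative integer j, ∫_{-∞}^{∞} e^{-x²/2} H_j(x) erf(x/√2) dx equals 2^{(j+2)/2} (j-1)!! when j is odd, and equals 0 when j is even. -/

import Mathlib

open MeasureTheory

/-- The physicists' Hermite polynomials (as real functions), defined by `H_0 = 1` and
`H_{j+1}(x) = 2x H_j(x) - H_j'(x)`. -/
noncomputable def physHermite : ℕ → ℝ → ℝ
  | 0 => fun _ => 1
  | n + 1 => fun x => 2 * x * physHermite n x - deriv (physHermite n) x

/-- The error function `erf(x) = (2/√π) ∫_0^x e^{-t²} dt`. -/
noncomputable def erf (x : ℝ) : ℝ :=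
  (2 / Real.sqrt Real.pi) * ∫ t in (0:ℝ)..x, Real.exp (-t^2)

open Real Polynomial

/-- Polynomial version of the physicists' Hermite polynomials. -/
noncomputable def PH : ℕ → Polynomial ℝ
  | 0 => 1
  | n + 1 => 2 * X * PH n - derivative (PH n)

lemma physHermite_eq (n : ℕ) : physHermite n = fun x => (PH n).eval x := by
  induction n with
  | zero => funext x; simp [physHermite, PH]
  | succ n ih =>
    funext x
    show 2 * x * physHermite n x - deriv (physHermite n) x = _
    rw [ih]
    rw [show deriv (fun x => (PH n).eval x) x = (derivative (PH n)).eval x from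
      Polynomial.deriv _]
    simp [PH]

lemma PH_derivative (n : ℕ) : derivative (PH (n+1)) = ((2*(n+1) : ℕ) : Polynomial ℝ) * PH n := by
  induction n with
  | zero =>
    show derivative (2 * X * PH 0 - derivative (PH 0)) = _
    simp [PH]
  | succ n ih =>
    have h1 : derivative (2 * X * PH (n+1))
        = 2 * PH (n+1) + 2 * X * (((2*(n+1) : ℕ) : Polynomial ℝ) * PH n) := by
      rw [derivative_mul, derivative_mul, derivative_ofNat, derivative_X, ih]; ring
    have h2 : derivative (derivative (PH (n+1)))
        = ((2*(n+1) : ℕ) : Polynomial ℝ) * derivative (PH n) := by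
      rw [ih, derivative_mul, derivative_natCast]; ring
    show derivative (2 * X * PH (n+1) - derivative (PH (n+1))) = _
    rw [derivative_sub, h1, h2, show PH (n+1) = 2 * X * PH n - derivative (PH n) from rfl]
    push_cast
    ring

lemma erf_hasDerivAt (y : ℝ) : HasDerivAt erf (2 / Real.sqrt π * Real.exp (-y^2)) y := by
  have hc : Continuous fun t : ℝ => Real.exp (-t^2) := by continuity
  have h := ((hc.integral_hasStrictDerivAt 0 y).hasDerivAt).const_mul (2 / Real.sqrt π)
  exact h

lemma erf_continuous : Continuous erf :=
  continuous_iff_continuousAt.2 fun y => (erf_hasDerivAt y).continuousAt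

lemma abs_erf_le (y : ℝ) : |erf y| ≤ 2 / Real.sqrt π * |y| := by
  have h : ‖∫ t in (0:ℝ)..y, Real.exp (-t^2)‖ ≤ 1 * |y - 0| := by
    apply intervalIntegral.norm_integral_le_of_norm_le_const
    intro x _
    rw [Real.norm_eq_abs, abs_of_pos (Real.exp_pos _), Real.exp_le_one_iff]
    nlinarith [sq_nonneg x]
  rw [Real.norm_eq_abs] at h
  have h2 : (0:ℝ) ≤ 2 / Real.sqrt π := by positivity
  calc |erf y| = 2 / Real.sqrt π * |∫ t in (0:ℝ)..y, Real.exp (-t^2)| := by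
        rw [erf, abs_mul, abs_of_nonneg h2]
    _ ≤ 2 / Real.sqrt π * |y| := by
        apply mul_le_mul_of_nonneg_left _ h2
        simpa using h

lemma abs_erf_scaled (x : ℝ) : |erf (x / Real.sqrt 2)| ≤ |x| := by
  have h1 := abs_erf_le (x / Real.sqrt 2)
  have hpi : (0:ℝ) < Real.sqrt π := Real.sqrt_pos.2 pi_pos
  have h2 : (0:ℝ) < Real.sqrt 2 := Real.sqrt_pos.2 two_pos
  have key : 2 / Real.sqrt π * |x / Real.sqrt 2| ≤ |x| := by
    rw [abs_div, abs_of_pos h2]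
    rw [div_mul_div_comm]
    rw [div_le_iff₀ (by positivity)]
    have h4 : (2:ℝ) ≤ Real.sqrt π * Real.sqrt 2 := by
      rw [← Real.sqrt_mul pi_pos.le]
      have : (2:ℝ) = Real.sqrt 4 := by
        rw [show (4:ℝ) = 2^2 by norm_num, Real.sqrt_sq two_pos.le]
      rw [this]
      apply Real.sqrt_le_sqrt
      nlinarith [pi_gt_three]
    nlinarith [abs_nonneg x]
  linarith

lemma integrable_poly_gauss (p : Polynomial ℝ) {b : ℝ} (hb : 0 < b) :
    Integrable fun x : ℝ => eval x p * Real.exp (-b * x^2) := by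
  induction p using Polynomial.induction_on' with
  | add p q hp hq => simpa [add_mul, Pi.add_def] using hp.add hq
  | monomial n a =>
    have h : Integrable fun x : ℝ => x^n * Real.exp (-b*x^2) := by
      have h2 := integrable_rpow_mul_exp_neg_mul_sq hb
        (s := (n:ℝ)) (lt_of_lt_of_le neg_one_lt_zero (Nat.cast_nonneg n))
      simpa [Real.rpow_natCast] using h2
    simpa [eval_monomial, mul_assoc] using h.const_mul a

lemma integrable_gauss_poly (p : Polynomial ℝ) :
    Integrable fun x : ℝ => Real.exp (-x^2) * eval x p := by
  have h := integrable_poly_gauss p one_pos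
  simp only [neg_one_mul] at h
  simpa [mul_comm] using h

lemma integrable_gauss2_poly (p : Polynomial ℝ) :
    Integrable fun x : ℝ => Real.exp (-x^2/2) * eval x p := by
  have h := integrable_poly_gauss p (by norm_num : (0:ℝ) < 1/2)
  have : ∀ x : ℝ, -(1/2 : ℝ) * x^2 = -x^2/2 := fun x => by ring
  simp only [this] at h
  simpa [mul_comm] using h

lemma integrable_gauss2_poly_erf (p : Polynomial ℝ) :
    Integrable fun x : ℝ => Real.exp (-x^2/2) * eval x p * erf (x / Real.sqrt 2) := by
  apply Integrable.mono' (integrable_gauss2_poly (X*p)).abs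
  · apply Continuous.aestronglyMeasurable
    apply Continuous.mul
    · exact (Continuous.mul (by continuity) p.continuous_aeval)
    · exact erf_continuous.comp (continuous_id.div_const _)
  · filter_upwards with x
    rw [Real.norm_eq_abs, abs_mul]
    have h1 : |Real.exp (-x^2/2) * eval x p| * |erf (x / Real.sqrt 2)|
        ≤ |Real.exp (-x^2/2) * eval x p| * |x| :=
      mul_le_mul_of_nonneg_left (abs_erf_scaled x) (abs_nonneg _)
    calc |Real.exp (-x^2/2) * eval x p| * |erf (x / Real.sqrt 2)|
        ≤ |Real.exp (-x^2/2) * eval x p| * |x| := h1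
      _ = |Real.exp (-x^2/2) * eval x (X*p)| := by
          rw [eval_mul, eval_X, ← abs_mul]; ring_nf

lemma hasDerivAt_gauss2 (x : ℝ) :
    HasDerivAt (fun x : ℝ => Real.exp (-x^2/2)) (-x * Real.exp (-x^2/2)) x := by
  have h : HasDerivAt (fun x : ℝ => -x^2/2) (-x) x := by
    have h0 := ((hasDerivAt_pow 2 x).neg).div_const 2
    refine h0.congr_deriv ?_
    push_cast
    ring
  simpa [mul_comm] using h.exp

lemma hasDerivAt_erf_scaled (x : ℝ) :
    HasDerivAt (fun x : ℝ => erf (x / Real.sqrt 2))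
      (Real.sqrt 2 / Real.sqrt π * Real.exp (-x^2/2)) x := by
  have hg : HasDerivAt (fun x : ℝ => x / Real.sqrt 2) (1 / Real.sqrt 2) x := by
    simpa using (hasDerivAt_id x).div_const (Real.sqrt 2)
  have h := (erf_hasDerivAt (x / Real.sqrt 2)).comp x hg
  refine h.congr_deriv ?_
  have h2 : Real.sqrt 2 * Real.sqrt 2 = 2 := Real.mul_self_sqrt two_pos.le
  have h3 : (-(x / Real.sqrt 2)^2) = -x^2/2 := by
    rw [div_pow, Real.sq_sqrt two_pos.le]; ring
  rw [h3]
  have hpi : Real.sqrt π ≠ 0 := ne_of_gt (Real.sqrt_pos.2 pi_pos)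
  have hs2 : Real.sqrt 2 ≠ 0 := ne_of_gt (Real.sqrt_pos.2 two_pos)
  field_simp
  linear_combination (-1 : ℝ) * h2

lemma hasDerivAt_main (p : Polynomial ℝ) (x : ℝ) :
    HasDerivAt (fun x : ℝ => Real.exp (-x^2/2) * eval x p * erf (x / Real.sqrt 2))
      (Real.exp (-x^2/2) * (eval x (derivative p - X*p)) * erf (x / Real.sqrt 2)
        + Real.sqrt 2 / Real.sqrt π * (Real.exp (-x^2) * eval x p)) x := by
  have h12 := (hasDerivAt_gauss2 x).mul (p.hasDerivAt x)
  have h := h12.mul (hasDerivAt_erf_scaled x)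
  refine h.congr_deriv ?_
  have hexp : Real.exp (-x^2/2) * Real.exp (-x^2/2) = Real.exp (-x^2) := by
    rw [← Real.exp_add]; ring_nf
  simp only [eval_sub, eval_mul, eval_X, Pi.mul_apply]
  linear_combination ((Real.sqrt 2 / Real.sqrt π) * eval x p) * hexp

lemma step (p : Polynomial ℝ) :
    (∫ x : ℝ, Real.exp (-x^2/2) * eval x (2*X*p - derivative p) * erf (x / Real.sqrt 2))
      = (∫ x : ℝ, Real.exp (-x^2/2) * eval x (derivative p) * erf (x / Real.sqrt 2))
        + 2 * (Real.sqrt 2 / Real.sqrt π) * ∫ x : ℝ, Real.exp (-x^2) * eval x p := by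
  set c := Real.sqrt 2 / Real.sqrt π with hc
  set f' : ℝ → ℝ := fun x =>
    (-2) * (Real.exp (-x^2/2) * (eval x (derivative p - X*p)) * erf (x / Real.sqrt 2)
      + c * (Real.exp (-x^2) * eval x p)) with hf'def
  have hf'int : Integrable f' := by
    apply Integrable.const_mul
    exact (integrable_gauss2_poly_erf (derivative p - X*p)).add
      ((integrable_gauss_poly p).const_mul c)
  have hzero : (∫ x : ℝ, f' x) = 0 := by
    apply integral_eq_zero_of_hasDerivAt_of_integrable
      (f := fun x : ℝ => (-2) * (Real.exp (-x^2/2) * eval x p * erf (x / Real.sqrt 2)))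
    · intro x
      exact (hasDerivAt_main p x).const_mul (-2)
    · exact hf'int
    · exact (integrable_gauss2_poly_erf p).const_mul (-2)
  have key : ∀ x : ℝ, Real.exp (-x^2/2) * eval x (2*X*p - derivative p) * erf (x / Real.sqrt 2)
      = f' x + (Real.exp (-x^2/2) * eval x (derivative p) * erf (x / Real.sqrt 2)
          + (2*c) * (Real.exp (-x^2) * eval x p)) := by
    intro x
    rw [hf'def]
    simp only [eval_sub, eval_mul, eval_X, eval_ofNat]
    ring
  have hA := integrable_gauss2_poly_erf (derivative p)
  have hB := (integrable_gauss_poly p).const_mul (2*c)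
  calc (∫ x : ℝ, Real.exp (-x^2/2) * eval x (2*X*p - derivative p) * erf (x / Real.sqrt 2))
      = ∫ x : ℝ, (f' x + (Real.exp (-x^2/2) * eval x (derivative p) * erf (x / Real.sqrt 2)
          + (2*c) * (Real.exp (-x^2) * eval x p))) := by simp_rw [key]
    _ = (∫ x : ℝ, f' x) + ∫ x : ℝ, (Real.exp (-x^2/2) * eval x (derivative p) * erf (x / Real.sqrt 2)
          + (2*c) * (Real.exp (-x^2) * eval x p)) := integral_add hf'int (hA.add hB)
    _ = (∫ x : ℝ, f' x) + ((∫ x : ℝ, Real.exp (-x^2/2) * eval x (derivative p) * erf (x / Real.sqrt 2))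
          + ∫ x : ℝ, (2*c) * (Real.exp (-x^2) * eval x p)) := by rw [integral_add hA hB]
    _ = _ := by rw [hzero, MeasureTheory.integral_const_mul]; ring

lemma gaussA (q : Polynomial ℝ) :
    (∫ x : ℝ, Real.exp (-x^2) * eval x (2*X*q - derivative q)) = 0 := by
  have hG : ∀ x : ℝ, HasDerivAt (fun x : ℝ => -(Real.exp (-x^2) * eval x q))
      (Real.exp (-x^2) * eval x (2*X*q - derivative q)) x := by
    intro x
    have h1 : HasDerivAt (fun x : ℝ => Real.exp (-x^2)) (-(2*x) * Real.exp (-x^2)) x := by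
      have h : HasDerivAt (fun x : ℝ => -x^2) (-(2*x)) x := by
        have h0 := (hasDerivAt_pow 2 x).neg
        refine h0.congr_deriv ?_
        push_cast; ring
      simpa [mul_comm] using h.exp
    have h := (h1.mul (q.hasDerivAt x)).neg
    refine h.congr_deriv ?_
    simp only [eval_sub, eval_mul, eval_X, eval_ofNat]
    ring
  have h0 := integral_eq_zero_of_hasDerivAt_of_integrable hG
    (integrable_gauss_poly (2*X*q - derivative q)) (integrable_gauss_poly q).neg
  exact h0

lemma gauss0 : (∫ x : ℝ, Real.exp (-x^2) * eval x (1 : Polynomial ℝ)) = Real.sqrt π := by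
  simp only [eval_one, mul_one]
  have h := integral_gaussian 1
  simpa [neg_one_mul] using h

lemma erf_neg (y : ℝ) : erf (-y) = - erf y := by
  have h := intervalIntegral.integral_comp_neg (a := (0:ℝ)) (b := y)
    (fun t => Real.exp (-t^2))
  simp only [neg_sq, neg_zero] at h
  rw [erf, erf, show (∫ t in (0:ℝ)..(-y), Real.exp (-t^2))
    = -∫ t in (0:ℝ)..y, Real.exp (-t^2) from ?_]
  · ring
  · rw [h, intervalIntegral.integral_symm]

/-- The integral in question. -/
noncomputable def II (j : ℕ) : ℝ :=
  ∫ x : ℝ, Real.exp (-x^2/2) * physHermite j x * erf (x / Real.sqrt 2)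

lemma II_zero : II 0 = 0 := by
  have hodd : ∀ x : ℝ, Real.exp (-(-x)^2/2) * physHermite 0 (-x) * erf ((-x) / Real.sqrt 2)
      = -(Real.exp (-x^2/2) * physHermite 0 x * erf (x / Real.sqrt 2)) := by
    intro x
    rw [show ((-x) / Real.sqrt 2) = -(x / Real.sqrt 2) by ring, erf_neg]
    simp only [physHermite, neg_sq]
    ring
  have h := (integral_neg_eq_self (μ := volume)
    (fun x : ℝ => Real.exp (-x^2/2) * physHermite 0 x * erf (x / Real.sqrt 2))).symm
  rw [II]
  have h2 : (∫ x : ℝ, Real.exp (-x^2/2) * physHermite 0 x * erf (x / Real.sqrt 2))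
      = -∫ x : ℝ, Real.exp (-x^2/2) * physHermite 0 x * erf (x / Real.sqrt 2) := by
    conv_lhs => rw [h]
    simp_rw [hodd]
    rw [integral_neg]
  linarith

lemma II_one : II 1 = 2 * Real.sqrt 2 := by
  rw [II]
  simp only [physHermite_eq]
  rw [show PH 1 = 2*X*(PH 0) - derivative (PH 0) from rfl, step (PH 0)]
  rw [show PH 0 = (1 : Polynomial ℝ) from rfl]
  rw [gauss0]
  simp only [derivative_one, eval_zero, mul_zero, zero_mul, integral_zero, zero_add]
  have hpi : Real.sqrt π ≠ 0 := ne_of_gt (Real.sqrt_pos.2 pi_pos)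
  field_simp

lemma II_succ_succ (j : ℕ) : II (j+2) = 2*(j+1) * II j := by
  rw [II, II]
  simp only [physHermite_eq]
  rw [show PH (j+2) = 2*X*(PH (j+1)) - derivative (PH (j+1)) from rfl, step (PH (j+1))]
  rw [show (∫ x : ℝ, Real.exp (-x^2) * eval x (PH (j+1))) = 0 from ?_]
  · rw [PH_derivative j]
    have hkey : ∀ x : ℝ, Real.exp (-x^2/2) * eval x (((2*(j+1) : ℕ) : Polynomial ℝ) * PH j)
          * erf (x / Real.sqrt 2)
        = ((2*(j+1) : ℕ) : ℝ) * (Real.exp (-x^2/2) * eval x (PH j) * erf (x / Real.sqrt 2)) := by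
      intro x
      simp only [eval_mul, eval_natCast]
      ring
    simp_rw [hkey]
    rw [MeasureTheory.integral_const_mul]
    push_cast
    ring
  · rw [show PH (j+1) = 2*X*(PH j) - derivative (PH j) from rfl]
    exact gaussA (PH j)

lemma II_main (j : ℕ) :
    II j = if Odd j then (2:ℝ) ^ (((j:ℝ) + 2)/2) * (Nat.doubleFactorial (j-1) : ℝ) else 0 := by
  induction j using Nat.strong_induction_on with
  | _ j ih =>
    match j with
    | 0 => rw [if_neg (by decide)]; exact II_zero
    | 1 =>
      rw [if_pos odd_one, II_one]
      norm_num
      rw [show (3:ℝ)/2 = 1 + (1/2 : ℝ) by norm_num, Real.rpow_add two_pos,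
        Real.rpow_one, ← Real.sqrt_eq_rpow]
    | (k+2) =>
      rw [II_succ_succ k, ih k (by omega)]
      by_cases hk : Odd k
      · obtain ⟨m, rfl⟩ := hk
        rw [if_pos ⟨m, by omega⟩, if_pos ⟨m+1, by omega⟩]
        rw [show (((2*m+1+2 : ℕ)):ℝ) = ((2*m+1 : ℕ):ℝ) + 2 by push_cast; ring]
        rw [show (((2*m+1:ℕ):ℝ) + 2 + 2)/2 = (((2*m+1:ℕ):ℝ)+2)/2 + 1 by ring]
        rw [Real.rpow_add two_pos, Real.rpow_one]
        rw [show (2*m+1+2-1 : ℕ) = (2*m)+2 by omega, show (2*m+1-1 : ℕ) = 2*m by omega]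
        rw [Nat.doubleFactorial_add_two]
        push_cast
        ring
      · have hk2 : ¬ Odd (k+2) := by
          rw [Nat.odd_iff] at *
          omega
        rw [if_neg hk, if_neg hk2, mul_zero]

/-- `∫_{-∞}^{∞} e^{-x²/2} H_j(x) erf(x/√2) dx` equals `2^{(j+2)/2} (j-1)!!` when `j` is odd,
and `0` when `j` is even. -/
theorem hermite_erf_integral (j : ℕ) :
    (Odd j →
      (∫ x : ℝ, Real.exp (-x^2/2) * physHermite j x * erf (x / Real.sqrt 2))
        = (2 : ℝ) ^ (((j:ℝ) + 2)/2) * (Nat.doubleFactorial (j-1) : ℝ)) ∧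
    (Even j →
      (∫ x : ℝ, Real.exp (-x^2/2) * physHermite j x * erf (x / Real.sqrt 2)) = 0) := by
  constructor
  · intro h
    have hm := II_main j
    rw [if_pos h] at hm
    exact hm
  · intro h
    have hm := II_main j
    rw [if_neg (Nat.not_odd_iff_even.mpr h)] at hm
    exact hm
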